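/- arXiv:1412.1543 — 2 statements merged into one kernel-verified Lean document; each statement's English description precedes it below -/
import Mathlib

section
/- Let (𝒫,𝓛) be a horizontal shadow representation in general position and let (a,b,q,i,i′) be a BD-instance such that: some BD(a,b,q,i,i′)-solution exists; the set {L_q,L_i,L_{i′}} does not dominate X(a,b); R(a,b) is not contained in S_{L_i}; b ∉ S_{l_{L_i}}; and there exists a minimum-cardinality BD(a,b,q,i,i′)-solution Z₀ such that Z₀ ∖ {L_i} dominates every x ∈ X(a,b) with x ∩ (S_{L_i} ∪ F_{L_i}) ≠ ∅. Call a tuple (c,L_{q′},L_j,L_{j′}) with c ∈ ℝ² and L_{q′},L_j,L_{j′} ∈ 𝓛 admissible if: (1) L_{q′} ∈ (𝓛^right_q ∩ 𝓛^left_{i,i′}) ∖ {L_i}; (2) (L_j,L_{j′}) is a right-crossing pair with L_j,L_{j′} ∈ (𝓛^right_q ∩ 𝓛^left_{i,i′}) ∖ {L_i}, and L_{j′} = L_{i′} whenever L_i ≠ L_{i′}; (3) L_{q′} ∈ 𝓛^left_{j,j′} and L_j,L_{j′} ∈ 𝓛^right_{q′}; (4) c = r_{L_j}∧b if (r_{L_j})₁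 ≤ b₁, and c = b otherwise; (5) {L_j,L_{j′}} dominates X(a,b) ∖ X(a,c). Then the minimum cardinality of a BD(a,b,q,i,i′)-solution equals the minimum, over all admissible tuples (c,L_{q′},L_j,L_{j′}) for which a BD(a,c,q′,j,j′)-solution exists, of the cardinality of {L_q,L_i} ∪ Z′, where Z′ is any minimum-cardinality BD(a,c,q′,j,j′)-solution. -/
/-!
Take a minimum solution `Z` such that `Z \ {L_i}` dominates the elements of `X(a,b)` meeting
`S_{L_i} ∪ F_{L_i}`. Everything `L_i` dominates meets `S_{L_i} ∪ F_{L_i}`, so `Z \ {L_i}`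
dominates all of `X(a,b)`. In `Z \ {L_i}` take `L_j` with rightmost right endpoint, `L_{j'}`
with lowest right diagonal (`L_{i'}` itself when `L_i ≠ L_{i'}`) and `L_{q'}` with highest
left diagonal: this is an admissible tuple and `Z \ {L_i}` solves the subinstance. Condition
(5) holds because an element dominated by `Z \ {L_i}` that reaches to the right of `r_{L_j}`
is dominated by `L_j` or `L_{j'}` (for points, by general position).

Conversely `{L_q, L_i} ∪ W` is a solution for every admissible tuple and every solution `W`
of its subinstance. As `|{L_q, L_i} ∪ W| ≤ |W| + 2` and `|Z| = |Z \ {L_i}| + 1`, a minimum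
solution of the subinstance found above either is as large as `Z \ {L_i}`, which is then
minimum too, or yields a union of size at most `|Z|`.
-/

open Set

abbrev Pt : Type := ℝ × ℝ

/-- The shadow of a point `t`. -/
def ptShadow (t : Pt) : Set Pt := {p : Pt | p.1 ≤ t.1 ∧ p.2 - p.1 ≤ t.2 - t.1}

/-- The shadow of a set of points. -/
def setShadow (L : Set Pt) : Set Pt := ⋃ t ∈ L, ptShadow t

/-- The reverse shadow of a point `t`. -/
def ptRevShadow (t : Pt) : Set Pt := {p : Pt | t.1 ≤ p.1 ∧ t.2 - t.1 ≤ p.2 - p.1}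

/-- The reverse shadow of a set of points. -/
def setRevShadow (L : Set Pt) : Set Pt := ⋃ t ∈ L, ptRevShadow t

/-- The region `A_t`. -/
def regionA (t : Pt) : Set Pt := {p : Pt | t.1 ≤ p.1 ∧ p.2 - p.1 ≤ t.2 - t.1}

/-- The region `B_t`. -/
def regionB (t : Pt) : Set Pt := {p : Pt | p.1 ≤ t.1 ∧ t.2 - t.1 ≤ p.2 - p.1}

/-- `s ∧ t := (s₁, s₁ + t₂ − t₁)`. -/
def diagMeet (s t : Pt) : Pt := (s.1, s.1 + t.2 - t.1)

/-- A closed horizontal line segment, given by its left and right endpoints. -/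
structure HSeg where
  l : Pt
  r : Pt
  horiz : l.2 = r.2
  le : l.1 ≤ r.1

/-- The set of points of a horizontal segment. -/
def HSeg.carrier (L : HSeg) : Set Pt := segment ℝ L.l L.r

/-- An element of a horizontal shadow representation: a point or a segment. -/
inductive Elem where
  | pt : Pt → Elem
  | seg : HSeg → Elem

/-- The set of points of the plane occupied by an element. -/
def Elem.carrier : Elem → Set Pt
  | .pt p => ({p} : Set Pt)
  | .seg L => L.carrier

/-- Adjacency between elements: two points are never adjacent; a point `p` and a
segment `L` are adjacent iff `p ∈ S_L`; two segments `L, L'` are adjacent iff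
`L ∩ S_{L'} ≠ ∅` or `L' ∩ S_L ≠ ∅`. -/
def ElemAdj : Elem → Elem → Prop
  | .pt _, .pt _ => False
  | .pt p, .seg L => p ∈ setShadow L.carrier
  | .seg L, .pt p => p ∈ setShadow L.carrier
  | .seg L, .seg L' =>
      (L.carrier ∩ setShadow L'.carrier).Nonempty ∨ (L'.carrier ∩ setShadow L.carrier).Nonempty

/-- `x` is dominated by the set `D`: it belongs to `D` or is adjacent to a member of `D`. -/
def DominatedBy (D : Set Elem) (x : Elem) : Prop := x ∈ D ∨ ∃ d ∈ D, ElemAdj x d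

/-- `D` dominates `X`. -/
def Dominates (D X : Set Elem) : Prop := ∀ x ∈ X, DominatedBy D x

/-- A horizontal shadow representation: a finite set of points and a finite set of
closed horizontal segments. -/
structure HSR where
  P : Set Pt
  Ls : Set HSeg
  finP : P.Finite
  finL : Ls.Finite

/-- The elements (points and segments) of a representation. -/
def HSR.elems (R : HSR) : Set Elem := (Elem.pt '' R.P) ∪ (Elem.seg '' R.Ls)

/-- All points of `𝒫` together with all endpoints of segments of `𝓛`. -/
def HSR.keyPts (R : HSR) : Set Pt := R.P ∪ ⋃ L ∈ R.Ls, ({L.l, L.r} : Set Pt)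

/-- General position: all points of `𝒫` and all endpoints of segments of `𝓛` have
pairwise distinct first coordinates and pairwise distinct values of
(second coordinate minus first coordinate). -/
def GenPos (R : HSR) : Prop :=
  ∀ s ∈ R.keyPts, ∀ t ∈ R.keyPts, s ≠ t → s.1 ≠ t.1 ∧ s.2 - s.1 ≠ t.2 - t.1

/-- `(L_j, L_{j'})` is a left-crossing pair. -/
def LeftCrossing (Lj Lj' : HSeg) : Prop := Lj.l ∈ ptShadow Lj'.l

/-- `(L_i, L_{i'})` is a right-crossing pair. -/
def RightCrossing (Li Li' : HSeg) : Prop := Li'.r ∈ ptShadow Li.r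

/-- `𝓛^right_{j,j′}`. -/
def LRightPair (R : HSR) (Lj Lj' : HSeg) : Set Elem :=
  {x | x ∈ R.elems ∧ Elem.carrier x ⊆ regionA (diagMeet Lj.l Lj'.l)}

/-- `𝓛^left_{i,i′}`. -/
def LLeftPair (R : HSR) (Li Li' : HSeg) : Set Elem :=
  {x | x ∈ R.elems ∧ Elem.carrier x ⊆ regionB (diagMeet Li.r Li'.r)}

/-- `𝓛^right_q`. -/
def LRightQ (R : HSR) (Lq : HSeg) : Set Elem :=
  {x | x ∈ R.elems ∧ ∀ p ∈ Elem.carrier x, p.2 - p.1 ≤ Lq.l.2 - Lq.l.1}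

/-- The set of elements corresponding to a set of segments. -/
def segSet (Z : Set HSeg) : Set Elem := Elem.seg '' Z

/-- `(L_i, L_{i'})` is an end-pair of `S`. -/
def IsEndPair (R : HSR) (S : Set Elem) (Li Li' : HSeg) : Prop :=
  RightCrossing Li Li' ∧ Elem.seg Li ∈ S ∧ Elem.seg Li' ∈ S ∧ S ⊆ LLeftPair R Li Li'

/-- `(L_j, L_{j'})` is a start-pair of `S`. -/
def IsStartPair (R : HSR) (S : Set Elem) (Lj Lj' : HSeg) : Prop :=
  LeftCrossing Lj Lj' ∧ Elem.seg Lj ∈ S ∧ Elem.seg Lj' ∈ S ∧ S ⊆ LRightPair R Lj Lj'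

/-- `L_q` is a diagonally leftmost segment of `S`. -/
def IsDiagLeftmost (R : HSR) (S : Set Elem) (Lq : HSeg) : Prop :=
  ∃ Lj, Elem.seg Lj ∈ S ∧ IsStartPair R S Lj Lq

/-- The region `R(a,b)`. -/
def regionR (a b : Pt) : Set Pt :=
  {p : Pt | p.1 < b.1 ∧ b.2 - b.1 ≤ p.2 - p.1 ∧ p.2 - p.1 ≤ a.2 - a.1}

/-- The set `X(a,b)` of elements entirely contained in `R(a,b)`. -/
def Xab (R : HSR) (a b : Pt) : Set Elem :=
  {x | x ∈ R.elems ∧ Elem.carrier x ⊆ regionR a b}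

/-- A `BD(a,b,q,i,i′)`-instance. -/
def BDInstance (R : HSR) (a b : Pt) (Lq Li Li' : HSeg) : Prop :=
  Lq ∈ R.Ls ∧ Li ∈ R.Ls ∧ Li' ∈ R.Ls ∧ RightCrossing Li Li' ∧
    Elem.seg Lq ∈ LLeftPair R Li Li' ∧ Elem.seg Li ∈ LRightQ R Lq ∧
    Elem.seg Li' ∈ LRightQ R Lq ∧ b.1 ≤ Li.r.1

/-- A `BD(a,b,q,i,i′)`-solution: a set `Z ⊆ 𝓛` dominating `X(a,b)`, with `(L_i,L_{i'})`
as an end-pair and `L_q` as a diagonally leftmost segment. -/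
def BDSolution (R : HSR) (a b : Pt) (Lq Li Li' : HSeg) (Z : Set HSeg) : Prop :=
  Z ⊆ R.Ls ∧ Dominates (segSet Z) (Xab R a b) ∧
    IsEndPair R (segSet Z) Li Li' ∧ IsDiagLeftmost R (segSet Z) Lq

/-- A minimum-cardinality `BD(a,b,q,i,i′)`-solution. -/
def IsMinBDSolution (R : HSR) (a b : Pt) (Lq Li Li' : HSeg) (Z : Set HSeg) : Prop :=
  BDSolution R a b Lq Li Li' Z ∧
    ∀ Z' : Set HSeg, BDSolution R a b Lq Li Li' Z' → Z.ncard ≤ Z'.ncard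

/-- An admissible tuple `(c, L_{q′}, L_j, L_{j′})` for the `BD(a,b,q,i,i′)` recursion. -/
def AdmissibleTuple (R : HSR) (a b : Pt) (Lq Li Li' : HSeg)
    (c : Pt) (Lq' Lj Lj' : HSeg) : Prop :=
  (Elem.seg Lq' ∈ LRightQ R Lq ∧ Elem.seg Lq' ∈ LLeftPair R Li Li' ∧ Lq' ≠ Li) ∧
  (RightCrossing Lj Lj' ∧
    (Elem.seg Lj ∈ LRightQ R Lq ∧ Elem.seg Lj ∈ LLeftPair R Li Li' ∧ Lj ≠ Li) ∧
    (Elem.seg Lj' ∈ LRightQ R Lq ∧ Elem.seg Lj' ∈ LLeftPair R Li Li' ∧ Lj' ≠ Li) ∧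
    (Li ≠ Li' → Lj' = Li')) ∧
  (Elem.seg Lq' ∈ LLeftPair R Lj Lj' ∧
    Elem.seg Lj ∈ LRightQ R Lq' ∧ Elem.seg Lj' ∈ LRightQ R Lq') ∧
  ((Lj.r.1 ≤ b.1 → c = diagMeet Lj.r b) ∧ (¬ Lj.r.1 ≤ b.1 → c = b)) ∧
  Dominates (segSet {Lj, Lj'}) (Xab R a b \ Xab R a c)


namespace HSeg

theorem carrier_eq (L : HSeg) : L.carrier = (·, L.r.2) '' Icc L.l.1 L.r.1 := by
  rw [← segment_eq_Icc L.le, Prod.image_mk_segment_left, HSeg.carrier]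
  exact congrArg (segment ℝ · L.r) (Prod.ext rfl L.horiz)

theorem mem_carrier {L : HSeg} {p : Pt} :
    p ∈ L.carrier ↔ L.l.1 ≤ p.1 ∧ p.1 ≤ L.r.1 ∧ p.2 = L.r.2 := by
  rw [carrier_eq]
  constructor
  · rintro ⟨x, ⟨hl, hr⟩, rfl⟩
    exact ⟨hl, hr, rfl⟩
  · rintro ⟨hl, hr, h2⟩
    exact ⟨p.1, ⟨hl, hr⟩, by rw [← h2]⟩

theorem l_mem (L : HSeg) : L.l ∈ L.carrier :=
  mem_carrier.2 ⟨le_rfl, L.le, L.horiz⟩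

theorem r_mem (L : HSeg) : L.r ∈ L.carrier :=
  mem_carrier.2 ⟨L.le, le_rfl, rfl⟩

theorem diag_le_l {L : HSeg} {p : Pt} (hp : p ∈ L.carrier) : p.2 - p.1 ≤ L.l.2 - L.l.1 := by
  obtain ⟨hl, -, h2⟩ := mem_carrier.1 hp
  linarith [L.horiz]

theorem r_diag_le {L : HSeg} {p : Pt} (hp : p ∈ L.carrier) : L.r.2 - L.r.1 ≤ p.2 - p.1 := by
  obtain ⟨-, hr, h2⟩ := mem_carrier.1 hp
  linarith

end HSeg

theorem mem_setShadow {C : Set Pt} {p : Pt} :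
    p ∈ setShadow C ↔ ∃ t ∈ C, p.1 ≤ t.1 ∧ p.2 - p.1 ≤ t.2 - t.1 := by
  simp only [setShadow, mem_iUnion₂, ptShadow, mem_ofPred_eq, exists_prop]

theorem mem_setRevShadow {C : Set Pt} {p : Pt} :
    p ∈ setRevShadow C ↔ ∃ t ∈ C, t.1 ≤ p.1 ∧ t.2 - t.1 ≤ p.2 - p.1 := by
  simp only [setRevShadow, mem_iUnion₂, ptRevShadow, mem_ofPred_eq, exists_prop]

theorem seg_mem_segSet {Z : Set HSeg} {L : HSeg} : Elem.seg L ∈ segSet Z ↔ L ∈ Z := by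
  simp [segSet]

theorem HSR.seg_mem_elems {R : HSR} {L : HSeg} : Elem.seg L ∈ R.elems ↔ L ∈ R.Ls := by
  simp [HSR.elems]

theorem seg_mem_LLeftPair {R : HSR} {L Li Li' : HSeg} :
    Elem.seg L ∈ LLeftPair R Li Li' ↔
      L ∈ R.Ls ∧ L.r.1 ≤ Li.r.1 ∧ Li'.r.2 - Li'.r.1 ≤ L.r.2 - L.r.1 := by
  simp only [LLeftPair, mem_ofPred_eq, HSR.seg_mem_elems, Elem.carrier, subset_def, regionB,
    diagMeet]
  refine and_congr_right fun _ => ⟨fun h => ?_, fun ⟨h1, h2⟩ p hp => ?_⟩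
  · obtain ⟨h1, h2⟩ := h L.r L.r_mem
    exact ⟨h1, by linarith⟩
  · have := HSeg.r_diag_le hp
    exact ⟨(HSeg.mem_carrier.1 hp).2.1.trans h1, by linarith⟩

theorem seg_mem_LRightPair {R : HSR} {L Lj Lj' : HSeg} :
    Elem.seg L ∈ LRightPair R Lj Lj' ↔
      L ∈ R.Ls ∧ Lj.l.1 ≤ L.l.1 ∧ L.l.2 - L.l.1 ≤ Lj'.l.2 - Lj'.l.1 := by
  simp only [LRightPair, mem_ofPred_eq, HSR.seg_mem_elems, Elem.carrier, subset_def, regionA,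
    diagMeet]
  refine and_congr_right fun _ => ⟨fun h => ?_, fun ⟨h1, h2⟩ p hp => ?_⟩
  · obtain ⟨h1, h2⟩ := h L.l L.l_mem
    exact ⟨h1, by linarith⟩
  · have := HSeg.diag_le_l hp
    exact ⟨h1.trans (HSeg.mem_carrier.1 hp).1, by linarith⟩

theorem seg_mem_LRightQ {R : HSR} {L Lq : HSeg} :
    Elem.seg L ∈ LRightQ R Lq ↔ L ∈ R.Ls ∧ L.l.2 - L.l.1 ≤ Lq.l.2 - Lq.l.1 := by
  simp only [LRightQ, mem_ofPred_eq, HSR.seg_mem_elems, Elem.carrier]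
  exact and_congr_right fun _ =>
    ⟨fun h => h L.l L.l_mem, fun h p hp => (HSeg.diag_le_l hp).trans h⟩

theorem Dominates.mono {D D' X X' : Set Elem} (h : Dominates D X) (hD : D ⊆ D') (hX : X' ⊆ X) :
    Dominates D' X' := by
  intro x hx
  rcases h x (hX hx) with hxD | ⟨d, hd, hadj⟩
  · exact Or.inl (hD hxD)
  · exact Or.inr ⟨d, hD hd, hadj⟩

theorem Dominates.nonempty {D X : Set Elem} (h : Dominates D X) (hX : X.Nonempty) :
    D.Nonempty := by
  obtain ⟨x, hx⟩ := hX
  rcases h x hx with hxD | ⟨d, hd, -⟩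
  exacts [⟨x, hxD⟩, ⟨d, hd⟩]

/-- A segment `y` with `L ∩ S_y ≠ ∅` meets `S_L ∪ F_L` in the reverse shadow `F_L`. -/
theorem DominatedBy.carrier_meets_shadow {x : Elem} {L : HSeg} (h : DominatedBy {.seg L} x) :
    (x.carrier ∩ (setShadow L.carrier ∪ setRevShadow L.carrier)).Nonempty := by
  rcases h with rfl | ⟨_, rfl, hadj⟩
  · exact ⟨L.l, L.l_mem, .inl (mem_setShadow.2 ⟨L.l, L.l_mem, le_rfl, le_rfl⟩)⟩
  cases x with
  | pt p => exact ⟨p, rfl, .inl hadj⟩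
  | seg y =>
    rcases hadj with ⟨p, hpy, hp⟩ | ⟨t, htL, ht⟩
    · exact ⟨p, hpy, .inl hp⟩
    · obtain ⟨p, hpy, h1, h2⟩ := mem_setShadow.1 ht
      exact ⟨p, hpy, .inr (mem_setRevShadow.2 ⟨t, htL, h1, h2⟩)⟩

theorem Dominates.diff_singleton {Z : Set HSeg} {L : HSeg} {X : Set Elem}
    (hZ : Dominates (segSet Z) X)
    (hL : Dominates (segSet (Z \ {L}))
      {x ∈ X | (x.carrier ∩ (setShadow L.carrier ∪ setRevShadow L.carrier)).Nonempty}) :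
    Dominates (segSet (Z \ {L})) X := by
  intro x hx
  by_cases hmeet : (x.carrier ∩ (setShadow L.carrier ∪ setRevShadow L.carrier)).Nonempty
  · exact hL x ⟨hx, hmeet⟩
  have hsplit : segSet Z ⊆ segSet (Z \ {L}) ∪ {.seg L} := by
    rintro _ ⟨w, hw, rfl⟩
    by_cases hwL : w = L
    · exact .inr (by rw [hwL]; rfl)
    · exact .inl ⟨w, ⟨hw, hwL⟩, rfl⟩
  rcases hZ x hx with hxZ | ⟨d, hdZ, hadj⟩
  · rcases hsplit hxZ with hx' | hx'
    · exact .inl hx'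
    · exact absurd (DominatedBy.carrier_meets_shadow (.inl hx')) hmeet
  · rcases hsplit hdZ with hd | hd
    · exact .inr ⟨d, hd, hadj⟩
    · exact absurd (DominatedBy.carrier_meets_shadow (.inr ⟨d, hd, hadj⟩)) hmeet

theorem GenPos.r_eq_of_fst_eq {R : HSR} (hgp : GenPos R) {L L' : HSeg} (hL : L ∈ R.Ls)
    (hL' : L' ∈ R.Ls) (h : L.r.1 = L'.r.1) : L.r = L'.r := by
  have hkey : ∀ {M : HSeg}, M ∈ R.Ls → M.r ∈ R.keyPts := fun hM =>
    .inr (mem_biUnion hM (mem_insert_of_mem _ rfl))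
  by_contra hne
  exact (hgp _ (hkey hL) _ (hkey hL') hne).1 h

theorem DominatedBy.pair_of_extremal {R : HSR} (hgp : GenPos R) {Z : Set HSeg}
    {Lj Lj' : HSeg} (hZ : segSet Z ⊆ LLeftPair R Lj Lj') (hLj : Lj ∈ Z) (hLj' : Lj' ∈ Z)
    {x : Elem} (hx : DominatedBy (segSet Z) x) {p : Pt} (hp : p ∈ x.carrier)
    (hpj : Lj.r.1 ≤ p.1) : DominatedBy (segSet {Lj, Lj'}) x := by
  have hext : ∀ w ∈ Z,
      w ∈ R.Ls ∧ w.r.1 ≤ Lj.r.1 ∧ Lj'.r.2 - Lj'.r.1 ≤ w.r.2 - w.r.1 :=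
    fun w hw => seg_mem_LLeftPair.1 (hZ ⟨w, hw, rfl⟩)
  have hLj_mem : Elem.seg Lj ∈ segSet {Lj, Lj'} := ⟨Lj, .inl rfl, rfl⟩
  cases x with
  | pt u =>
    obtain rfl : p = u := hp
    obtain ⟨_, ⟨w, hw, rfl⟩, hadj⟩ := hx.resolve_left (by rintro ⟨_, -, ⟨⟩⟩)
    obtain ⟨t, htw, ht1, ht2⟩ := mem_setShadow.1 hadj
    obtain ⟨-, ht_le, ht⟩ := HSeg.mem_carrier.1 htw
    -- `p` lies on the vertical line through `r_w`, which general position puts at `r_{L_j}`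
    have hwr : w.r = Lj.r := hgp.r_eq_of_fst_eq (hext w hw).1 (hext Lj hLj).1
      (by linarith [(hext w hw).2.1])
    have htr : t = Lj.r := by rw [← hwr]; exact Prod.ext (by linarith [(hext w hw).2.1]) ht
    exact .inr ⟨_, hLj_mem, mem_setShadow.2 ⟨t, htr ▸ Lj.r_mem, ht1, ht2⟩⟩
  | seg y =>
    obtain ⟨-, hpy, -⟩ := HSeg.mem_carrier.1 hp
    by_cases hyl : y.l.1 ≤ Lj.r.1
    · have hq : ((Lj.r.1, y.r.2) : Pt) ∈ y.carrier :=
        HSeg.mem_carrier.2 ⟨hyl, hpj.trans hpy, rfl⟩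
      rcases le_total (y.r.2 - Lj.r.1) (Lj.r.2 - Lj.r.1) with h | h
      · exact .inr ⟨_, hLj_mem,
          .inl ⟨_, hq, mem_setShadow.2 ⟨Lj.r, Lj.r_mem, le_rfl, h⟩⟩⟩
      · exact .inr ⟨_, hLj_mem,
          .inr ⟨Lj.r, Lj.r_mem, mem_setShadow.2 ⟨_, hq, le_rfl, h⟩⟩⟩
    rw [not_le] at hyl
    rcases hx with ⟨w, hw, hwy⟩ | ⟨_, ⟨w, hw, rfl⟩, hadj⟩
    · have hwr := (hext w hw).2.1
      cases hwy
      linarith [y.le]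
    rcases hadj with ⟨s, hsy, hs⟩ | ⟨t, htw, ht⟩
    · obtain ⟨t, htw, hst, -⟩ := mem_setShadow.1 hs
      linarith [(HSeg.mem_carrier.1 hsy).1, (HSeg.mem_carrier.1 htw).2.1, (hext w hw).2.1]
    · obtain ⟨s, hsy, -, hts⟩ := mem_setShadow.1 ht
      refine .inr ⟨_, ⟨Lj', .inr rfl, rfl⟩, .inr ⟨Lj'.r, Lj'.r_mem, ?_⟩⟩
      refine mem_setShadow.2 ⟨y.l, y.l_mem, by linarith [(hext Lj' hLj').2.1], ?_⟩
      linarith [(hext w hw).2.2, HSeg.r_diag_le htw, HSeg.diag_le_l hsy]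

theorem seg_mem_LRightQ_trans {R : HSR} {L Lq' Lq : HSeg} (hL : Elem.seg L ∈ LRightQ R Lq')
    (hq' : Elem.seg Lq' ∈ LRightQ R Lq) : Elem.seg L ∈ LRightQ R Lq := by
  rw [seg_mem_LRightQ] at *
  exact ⟨hL.1, hL.2.trans hq'.2⟩

theorem seg_mem_LLeftPair_trans {R : HSR} {L Lj Lj' Li Li' : HSeg}
    (hL : Elem.seg L ∈ LLeftPair R Lj Lj') (hj : Elem.seg Lj ∈ LLeftPair R Li Li')
    (hj' : Elem.seg Lj' ∈ LLeftPair R Li Li') : Elem.seg L ∈ LLeftPair R Li Li' := by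
  rw [seg_mem_LLeftPair] at *
  exact ⟨hL.1, hL.2.1.trans hj.2.1, hj'.2.2.trans hL.2.2⟩

theorem RightCrossing.self_mem_LLeftPair {R : HSR} {Li Li' : HSeg} (h : RightCrossing Li Li')
    (hLi : Li ∈ R.Ls) : Elem.seg Li ∈ LLeftPair R Li Li' :=
  seg_mem_LLeftPair.2 ⟨hLi, le_rfl, h.2⟩

theorem IsDiagLeftmost.mem_LRightQ {R : HSR} {Z : Set HSeg} {Lq L : HSeg}
    (h : IsDiagLeftmost R (segSet Z) Lq) (hL : L ∈ Z) : Elem.seg L ∈ LRightQ R Lq := by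
  obtain ⟨Lj, -, -, -, -, hsub⟩ := h
  obtain ⟨hLs, -, hdiag⟩ := seg_mem_LRightPair.1 (hsub ⟨L, hL, rfl⟩)
  exact seg_mem_LRightQ.2 ⟨hLs, hdiag⟩

/-- The segment of `Z` with leftmost left endpoint completes `L_q` to a start-pair. -/
theorem isDiagLeftmost_of_forall {R : HSR} {Z : Set HSeg} {Lq : HSeg} (hLq : Lq ∈ Z)
    (hZ : ∀ L ∈ Z, Elem.seg L ∈ LRightQ R Lq) : IsDiagLeftmost R (segSet Z) Lq := by
  have hZLs : Z ⊆ R.Ls := fun L hL => (seg_mem_LRightQ.1 (hZ L hL)).1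
  obtain ⟨Lm, hLm, hmin⟩ := exists_min_image Z (·.l.1) (R.finL.subset hZLs) ⟨Lq, hLq⟩
  refine ⟨Lm, ⟨Lm, hLm, rfl⟩, ⟨hmin Lq hLq, (seg_mem_LRightQ.1 (hZ Lm hLm)).2⟩,
    ⟨Lm, hLm, rfl⟩, ⟨Lq, hLq, rfl⟩, ?_⟩
  rintro _ ⟨L, hL, rfl⟩
  exact seg_mem_LRightPair.2 ⟨hZLs hL, hmin L hL, (seg_mem_LRightQ.1 (hZ L hL)).2⟩

theorem BDSolution.union_of_admissible {R : HSR} {a b c : Pt} {Lq Li Li' Lq' Lj Lj' : HSeg}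
    {W : Set HSeg} (hinst : BDInstance R a b Lq Li Li')
    (hadm : AdmissibleTuple R a b Lq Li Li' c Lq' Lj Lj') (hW : BDSolution R a c Lq' Lj Lj' W) :
    BDSolution R a b Lq Li Li' ({Lq, Li} ∪ W) := by
  obtain ⟨hLq, hLi, -, hcross, hLqB, hLiA, -, -⟩ := hinst
  obtain ⟨⟨hq'A, -, -⟩, ⟨-, ⟨-, hjB, -⟩, ⟨-, hj'B, -⟩, hLj'⟩, -, -, hdom⟩ :=
    hadm
  obtain ⟨-, hWdom, hWend, hWleft⟩ := hW
  have hLjW : Lj ∈ W := seg_mem_segSet.1 hWend.2.1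
  have hLj'W : Lj' ∈ W := seg_mem_segSet.1 hWend.2.2.1
  have hU : ∀ L ∈ ({Lq, Li} ∪ W : Set HSeg),
      Elem.seg L ∈ LRightQ R Lq ∧ Elem.seg L ∈ LLeftPair R Li Li' := by
    rintro L ((rfl | rfl) | hL)
    · exact ⟨seg_mem_LRightQ.2 ⟨hLq, le_rfl⟩, hLqB⟩
    · exact ⟨hLiA, hcross.self_mem_LLeftPair hLi⟩
    · exact ⟨seg_mem_LRightQ_trans (hWleft.mem_LRightQ hL) hq'A,
        seg_mem_LLeftPair_trans (hWend.2.2.2 ⟨L, hL, rfl⟩) hjB hj'B⟩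
  have hLiU : Li ∈ ({Lq, Li} ∪ W : Set HSeg) := .inl (.inr rfl)
  refine ⟨fun L hL => (seg_mem_LRightQ.1 (hU L hL).1).1, fun x hx => ?_,
    ⟨hcross, ⟨Li, hLiU, rfl⟩, ?_, fun _ ⟨L, hL, hLx⟩ => hLx ▸ (hU L hL).2⟩,
    isDiagLeftmost_of_forall (.inl (.inl rfl)) fun L hL => (hU L hL).1⟩
  · by_cases hxc : x ∈ Xab R a c
    · exact hWdom.mono (image_mono subset_union_right) subset_rfl x hxc
    · have hpair : ({Lj, Lj'} : Set HSeg) ⊆ {Lq, Li} ∪ W :=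
        insert_subset (.inr hLjW) (singleton_subset_iff.2 (.inr hLj'W))
      exact hdom.mono (image_mono hpair) subset_rfl x ⟨hx, hxc⟩
  · by_cases hii : Li = Li'
    · exact ⟨Li, hLiU, by rw [hii]⟩
    · exact ⟨Li', .inr (hLj' hii ▸ hLj'W), rfl⟩

/-- The point `c` that condition (4) of `AdmissibleTuple` attaches to `s = r_{L_j}`. -/
noncomputable def cutPoint (s b : Pt) : Pt := if s.1 ≤ b.1 then diagMeet s b else b

theorem cutPoint_spec (s b : Pt) :
    (s.1 ≤ b.1 → cutPoint s b = diagMeet s b) ∧ (¬ s.1 ≤ b.1 → cutPoint s b = b) :=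
  ⟨fun h => if_pos h, fun h => if_neg h⟩

theorem regionR_cutPoint (a s b : Pt) :
    regionR a (cutPoint s b) = regionR a b ∩ {p | p.1 < s.1} := by
  ext p
  simp only [cutPoint, regionR, diagMeet, mem_inter_iff, mem_ofPred_eq]
  split_ifs with h
  · constructor
    · rintro ⟨h1, h2, h3⟩
      exact ⟨⟨by linarith, by linarith, h3⟩, h1⟩
    · rintro ⟨⟨-, h2, h3⟩, h1⟩
      exact ⟨h1, by linarith, h3⟩
  · constructor
    · rintro ⟨h1, h2, h3⟩
      exact ⟨⟨h1, h2, h3⟩, by linarith⟩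
    · rintro ⟨h1, -⟩
      exact h1

theorem exists_le_fst_of_mem_Xab_diff {R : HSR} {a b s : Pt} {x : Elem}
    (hx : x ∈ Xab R a b \ Xab R a (cutPoint s b)) : ∃ p ∈ x.carrier, s.1 ≤ p.1 := by
  obtain ⟨⟨hxR, hxb⟩, hxc⟩ := hx
  by_contra! h
  exact hxc ⟨hxR, by rw [regionR_cutPoint]; exact fun p hp => ⟨hxb hp, h p hp⟩⟩

theorem Xab_cutPoint_subset (R : HSR) (a s b : Pt) : Xab R a (cutPoint s b) ⊆ Xab R a b := by
  rintro x ⟨hxR, hx⟩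
  rw [regionR_cutPoint] at hx
  exact ⟨hxR, hx.trans inter_subset_left⟩

theorem BDSolution.exists_admissible_diff_singleton {R : HSR} (hgp : GenPos R) {a b : Pt}
    {Lq Li Li' : HSeg} {Z : Set HSeg} (hZ : BDSolution R a b Lq Li Li' Z)
    (hdom : Dominates (segSet (Z \ {Li})) (Xab R a b)) (hne : (Z \ {Li}).Nonempty) :
    ∃ c Lq' Lj Lj', AdmissibleTuple R a b Lq Li Li' c Lq' Lj Lj' ∧
      BDSolution R a c Lq' Lj Lj' (Z \ {Li}) := by
  obtain ⟨hZLs, -, hend, hleft⟩ := hZ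
  set Z' := Z \ {Li}
  have hfin : Z'.Finite := R.finL.subset (sdiff_subset.trans hZLs)
  have hZ' : ∀ L ∈ Z',
      Elem.seg L ∈ LRightQ R Lq ∧ Elem.seg L ∈ LLeftPair R Li Li' ∧ L ≠ Li :=
    fun L hL => ⟨hleft.mem_LRightQ hL.1, hend.2.2.2 ⟨L, hL.1, rfl⟩, hL.2⟩
  obtain ⟨Lj, hLj, hLj_max⟩ := exists_max_image Z' (·.r.1) hfin hne
  obtain ⟨Lq', hLq', hLq'_max⟩ := exists_max_image Z' (fun L => L.l.2 - L.l.1) hfin hne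
  obtain ⟨Lj', hLj', hLj'_min, hLj'_eq⟩ : ∃ Lj' ∈ Z',
      (∀ L ∈ Z', Lj'.r.2 - Lj'.r.1 ≤ L.r.2 - L.r.1) ∧ (Li ≠ Li' → Lj' = Li') := by
    by_cases hii : Li = Li'
    · obtain ⟨L, hL, hmin⟩ := exists_min_image Z' (fun L => L.r.2 - L.r.1) hfin hne
      exact ⟨L, hL, hmin, absurd hii⟩
    · exact ⟨Li', ⟨seg_mem_segSet.1 hend.2.2.1, Ne.symm hii⟩,
        fun L hL => (seg_mem_LLeftPair.1 (hZ' L hL).2.1).2.2, fun _ => rfl⟩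
  have hend' : IsEndPair R (segSet Z') Lj Lj' :=
    ⟨⟨hLj_max Lj' hLj', hLj'_min Lj hLj⟩, ⟨Lj, hLj, rfl⟩, ⟨Lj', hLj', rfl⟩,
      fun _ ⟨L, hL, hLx⟩ =>
        hLx ▸ seg_mem_LLeftPair.2 ⟨hZLs hL.1, hLj_max L hL, hLj'_min L hL⟩⟩
  have hq' : ∀ L ∈ Z', Elem.seg L ∈ LRightQ R Lq' :=
    fun L hL => seg_mem_LRightQ.2 ⟨hZLs hL.1, hLq'_max L hL⟩
  refine ⟨cutPoint Lj.r b, Lq', Lj, Lj',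
    ⟨hZ' Lq' hLq', ⟨hend'.1, hZ' Lj hLj, hZ' Lj' hLj', hLj'_eq⟩,
      ⟨hend'.2.2.2 ⟨Lq', hLq', rfl⟩, hq' Lj hLj, hq' Lj' hLj'⟩, cutPoint_spec _ _, ?_⟩,
    sdiff_subset.trans hZLs, hdom.mono subset_rfl (Xab_cutPoint_subset R a _ b), hend',
    isDiagLeftmost_of_forall hLq' hq'⟩
  intro x hx
  obtain ⟨p, hp, hpj⟩ := exists_le_fst_of_mem_Xab_diff hx
  exact (hdom x hx.1).pair_of_extremal hgp hend'.2.2.2 hLj hLj' hp hpj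

theorem exists_minimal_ncard_union_eq {α : Type*} {P : Set α → Prop} {A Z : Set α}
    (hZ : P Z) (hA : A.ncard ≤ 2) (hAZ : Z.ncard + 1 = (A ∪ Z).ncard)
    (hlow : ∀ W, P W → (A ∪ Z).ncard ≤ (A ∪ W).ncard) :
    ∃ W, (P W ∧ ∀ V, P V → W.ncard ≤ V.ncard) ∧ (A ∪ Z).ncard = (A ∪ W).ncard := by
  obtain ⟨W, hW, hWmin⟩ := (measure Set.ncard).wf.has_min {W | P W} ⟨Z, hZ⟩
  have hWmin' : ∀ V, P V → W.ncard ≤ V.ncard := fun V hV => not_lt.1 (hWmin V hV)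
  rcases (hWmin' Z hZ).eq_or_lt with heq | hlt
  · exact ⟨Z, ⟨hZ, heq ▸ hWmin'⟩, rfl⟩
  · refine ⟨W, ⟨hW, hWmin'⟩, le_antisymm (hlow W hW) ?_⟩
    have := ncard_union_le A W
    omega

theorem stmt7_general (R : HSR) (hgp : GenPos R) (a b : Pt) (Lq Li Li' : HSeg)
    (hinst : BDInstance R a b Lq Li Li')
    (hndom : ¬ Dominates (segSet {Lq, Li, Li'}) (Xab R a b))
    (hmin0 : ∃ Z₀ : Set HSeg, IsMinBDSolution R a b Lq Li Li' Z₀ ∧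
      Dominates (segSet (Z₀ \ {Li}))
        {x ∈ Xab R a b |
          (Elem.carrier x ∩ (setShadow Li.carrier ∪ setRevShadow Li.carrier)).Nonempty}) :
    ∀ Z₀ : Set HSeg, IsMinBDSolution R a b Lq Li Li' Z₀ →
      ((∀ (c : Pt) (Lq' Lj Lj' : HSeg), AdmissibleTuple R a b Lq Li Li' c Lq' Lj Lj' →
          ∀ Z' : Set HSeg, IsMinBDSolution R a c Lq' Lj Lj' Z' →
            Z₀.ncard ≤ (({Lq, Li} : Set HSeg) ∪ Z').ncard) ∧
        (∃ (c : Pt) (Lq' Lj Lj' : HSeg), AdmissibleTuple R a b Lq Li Li' c Lq' Lj Lj' ∧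
          ∃ Z' : Set HSeg, IsMinBDSolution R a c Lq' Lj Lj' Z' ∧
            Z₀.ncard = (({Lq, Li} : Set HSeg) ∪ Z').ncard)) := by
  intro Z₀ hZ₀
  obtain ⟨Z, hZ, hZdom⟩ := hmin0
  obtain ⟨hZLs, hZX, ⟨-, hLi, -⟩, ⟨-, -, -, -, hLq, -⟩⟩ := hZ.1
  have hlow : ∀ c Lq' Lj Lj', AdmissibleTuple R a b Lq Li Li' c Lq' Lj Lj' →
      ∀ W, BDSolution R a c Lq' Lj Lj' W → Z₀.ncard ≤ (({Lq, Li} : Set HSeg) ∪ W).ncard :=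
    fun c Lq' Lj Lj' hadm W hW => hZ₀.2 _ (hW.union_of_admissible hinst hadm)
  refine ⟨fun c Lq' Lj Lj' hadm W hW => hlow c Lq' Lj Lj' hadm W hW.1, ?_⟩
  have hdom := hZX.diff_singleton hZdom
  obtain ⟨x, hx, -⟩ := not_forall₂.1 hndom
  obtain ⟨c, Lq', Lj, Lj', hadm, hsol⟩ :=
    hZ.1.exists_admissible_diff_singleton hgp hdom (image_nonempty.1 (hdom.nonempty ⟨x, hx⟩))
  have hunion : ({Lq, Li} : Set HSeg) ∪ (Z \ {Li}) = Z := by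
    rw [insert_union, singleton_union, insert_sdiff_singleton,
      insert_eq_of_mem (seg_mem_segSet.1 hLi),
      insert_eq_of_mem (seg_mem_segSet.1 hLq)]
  have hcard : Z₀.ncard = Z.ncard := le_antisymm (hZ₀.2 Z hZ.1) (hZ.2 Z₀ hZ₀.1)
  obtain ⟨W, hW, hWcard⟩ := exists_minimal_ncard_union_eq hsol
    ((ncard_insert_le _ _).trans (by rw [ncard_singleton]))
    (by
      rw [hunion]
      exact ncard_sdiff_singleton_add_one (seg_mem_segSet.1 hLi) (R.finL.subset hZLs))
    (fun W hW => hunion ▸ hcard ▸ hlow c Lq' Lj Lj' hadm W hW)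
  exact ⟨c, Lq', Lj, Lj', hadm, W, hW, by rw [hcard, ← hWcard, hunion]⟩

/-- The recursion of Lemma `bounded-dom-correctness-lem-1`: the minimum
cardinality of a `BD(a,b,q,i,i′)`-solution equals the minimum over admissible tuples of
`|{L_q,L_i} ∪ Z′|` for minimum solutions `Z′` of the subinstance. -/
theorem stmt7 (R : HSR) (hgp : GenPos R) (a b : Pt) (Lq Li Li' : HSeg)
    (hinst : BDInstance R a b Lq Li Li')
    (hex : ∃ Z : Set HSeg, BDSolution R a b Lq Li Li' Z)
    (hndom : ¬ Dominates (segSet {Lq, Li, Li'}) (Xab R a b))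
    (hRab : ¬ regionR a b ⊆ setShadow Li.carrier)
    (hb : b ∉ ptShadow Li.l)
    (hmin0 : ∃ Z₀ : Set HSeg, IsMinBDSolution R a b Lq Li Li' Z₀ ∧
      Dominates (segSet (Z₀ \ {Li}))
        {x ∈ Xab R a b |
          (Elem.carrier x ∩ (setShadow Li.carrier ∪ setRevShadow Li.carrier)).Nonempty}) :
    ∀ Z₀ : Set HSeg, IsMinBDSolution R a b Lq Li Li' Z₀ →
      ((∀ (c : Pt) (Lq' Lj Lj' : HSeg), AdmissibleTuple R a b Lq Li Li' c Lq' Lj Lj' →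
          ∀ Z' : Set HSeg, IsMinBDSolution R a c Lq' Lj Lj' Z' →
            Z₀.ncard ≤ (({Lq, Li} : Set HSeg) ∪ Z').ncard) ∧
        (∃ (c : Pt) (Lq' Lj Lj' : HSeg), AdmissibleTuple R a b Lq Li Li' c Lq' Lj Lj' ∧
          ∃ Z' : Set HSeg, IsMinBDSolution R a c Lq' Lj Lj' Z' ∧
            Z₀.ncard = (({Lq, Li} : Set HSeg) ∪ Z').ncard)) :=
  stmt7_general R hgp a b Lq Li Li' hinst hndom hmin0
end

section
/- Let (𝒫,𝓛) be a canonical horizontal shadow representation in general position such that the graph G(𝒫,𝓛) is connected. Then there exists a dominating set D of 𝒫 ∪ 𝓛 of minimum cardinality that is normalized, i.e., (N(p) ∪ H(p)) ∩ D = ∅ for every p ∈ D ∩ 𝒫, and D ∩ 𝒫 ⊆ 𝒫* where 𝒫* := {p ∈ 𝒫 : p ∉ S_{p′} for every p′ ∈ 𝒫 ∖ {p}}. -/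
/-!
Take a minimum dominating set `D` with as few points as possible. If `D` violates normality,
trade one point of `D`, or two comparable ones, for as many segments: a segment whose shadow
contains the point (it exists by connectivity) or a segment meeting the shadow of the point
(it exists by canonicity). A segment adjacent to a removed point `p` has `p` in its shadow,
hence is adjacent to every segment meeting the shadow of `p`, so the new set still dominates,
has no more elements and fewer points than `D`.
-/

open Set

/-- Adjacency of elements is symmetric. -/
lemma elemAdj_symm : ∀ {x y : Elem}, ElemAdj x y → ElemAdj y x := by
  intro x y h
  match x, y with
  | .pt _, .pt _ => exact h.elim
  | .pt _, .seg _ => exact h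
  | .seg _, .pt _ => exact h
  | .seg _, .seg _ => exact h.symm

/-- The graph `G(𝒫,𝓛)` on the elements of the representation. -/
def graphOf (R : HSR) : SimpleGraph R.elems where
  Adj x y := x ≠ y ∧ ElemAdj x.1 y.1
  symm := by
    constructor
    intro x y h
    exact ⟨h.1.symm, elemAdj_symm h.2⟩
  loopless := by
    constructor
    intro x h
    exact h.1 rfl

/-- The neighbourhood `N(p)` of a point `p`, as a set of elements. -/
def NElemSet (R : HSR) (p : Pt) : Set Elem :=
  {x | ∃ L ∈ R.Ls, p ∈ setShadow L.carrier ∧ x = Elem.seg L}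

/-- The hovering set `H(p)` of a point `p`, as a set of elements. -/
def HoverSet (R : HSR) (p : Pt) : Set Elem :=
  {x | (∃ p' ∈ R.P, p' ≠ p ∧ p' ∈ ptShadow p ∧ x = Elem.pt p') ∨
    (∃ L ∈ R.Ls, (L.carrier ∩ ptShadow p).Nonempty ∧ p ∉ setShadow L.carrier ∧
      x = Elem.seg L)}

/-- A representation is canonical if every point has a segment in its hovering set. -/
def Canonical (R : HSR) : Prop := ∀ p ∈ R.P, ∃ L ∈ R.Ls, Elem.seg L ∈ HoverSet R p

/-- The set `𝒫*` of points of `𝒫` which lie in no shadow of another point of `𝒫`. -/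
def Pstar (R : HSR) : Set Pt :=
  {p | p ∈ R.P ∧ ∀ p' ∈ R.P, p' ≠ p → p ∉ ptShadow p'}

lemma mem_ptShadow_trans {q p t : Pt} (hq : q ∈ ptShadow p) (hp : p ∈ ptShadow t) :
    q ∈ ptShadow t :=
  ⟨hq.1.trans hp.1, hq.2.trans hp.2⟩

lemma mem_setShadow_iff {q : Pt} {C : Set Pt} : q ∈ setShadow C ↔ ∃ t ∈ C, q ∈ ptShadow t := by
  simp [setShadow]

lemma mem_setShadow_of_mem_ptShadow {q p : Pt} {C : Set Pt} (hq : q ∈ ptShadow p)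
    (hp : p ∈ setShadow C) : q ∈ setShadow C := by
  obtain ⟨t, ht, hpt⟩ := mem_setShadow_iff.1 hp
  exact mem_setShadow_iff.2 ⟨t, ht, mem_ptShadow_trans hq hpt⟩

lemma elemAdj_seg_of_inter_ptShadow_nonempty {L L' : HSeg} {p : Pt}
    (hL : (L.carrier ∩ ptShadow p).Nonempty) (hp : p ∈ setShadow L'.carrier) :
    ElemAdj (.seg L') (.seg L) := by
  obtain ⟨z, hzL, hz⟩ := hL
  exact Or.inr ⟨z, hzL, mem_setShadow_of_mem_ptShadow hz hp⟩

namespace HSR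

@[simp]
lemma pt_mem_elems {R : HSR} {p : Pt} : Elem.pt p ∈ R.elems ↔ p ∈ R.P := by
  simp [HSR.elems]

@[simp]
lemma seg_mem_elems_s19 {R : HSR} {L : HSeg} : Elem.seg L ∈ R.elems ↔ L ∈ R.Ls := by
  simp [HSR.elems]

lemma elems_finite (R : HSR) : R.elems.Finite :=
  (R.finP.image _).union (R.finL.image _)

end HSR

lemma Canonical.exists_inter_ptShadow_nonempty {R : HSR} (hcan : Canonical R) {p : Pt}
    (hp : p ∈ R.P) : ∃ L ∈ R.Ls, (L.carrier ∩ ptShadow p).Nonempty := by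
  obtain ⟨L, hL, hmem⟩ := hcan p hp
  rcases hmem with ⟨_, _, _, _, h⟩ | ⟨L', _, hmeet, _, h⟩
  · cases h
  · cases h
    exact ⟨L, hL, hmeet⟩

lemma exists_mem_setShadow_of_connected {R : HSR} (hconn : (graphOf R).Connected) {p : Pt}
    (hp : p ∈ R.P) {L₀ : HSeg} (hL₀ : L₀ ∈ R.Ls) : ∃ L ∈ R.Ls, p ∈ setShadow L.carrier := by
  have : Nontrivial R.elems :=
    ⟨⟨⟨.pt p, HSR.pt_mem_elems.2 hp⟩, ⟨.seg L₀, HSR.seg_mem_elems_s19.2 hL₀⟩, by simp⟩⟩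
  obtain ⟨⟨u, hu⟩, -, hadj⟩ :=
    hconn.preconnected.exists_adj_of_nontrivial ⟨.pt p, HSR.pt_mem_elems.2 hp⟩
  cases u with
  | pt _ => exact hadj.elim
  | seg L' => exact ⟨L', HSR.seg_mem_elems_s19.1 hu, hadj⟩

lemma Dominates.of_sdiff_subset {D D' X E : Set Elem} (hdom : Dominates D E)
    (hX : X ⊆ range Elem.pt) (hDX : D \ X ⊆ D')
    (hcov : ∀ p, Elem.pt p ∈ X → (∃ d ∈ D', ElemAdj (.pt p) d) ∧
      ∃ L, Elem.seg L ∈ D' ∧ (L.carrier ∩ ptShadow p).Nonempty) :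
    Dominates D' E := by
  intro x hx
  rcases hdom x hx with hxD | ⟨d, hdD, hadj⟩
  · by_cases hxX : x ∈ X
    · obtain ⟨p, rfl⟩ := hX hxX
      exact Or.inr (hcov p hxX).1
    · exact Or.inl (hDX ⟨hxD, hxX⟩)
  · by_cases hdX : d ∈ X
    · obtain ⟨p, rfl⟩ := hX hdX
      obtain ⟨L, hL, hmeet⟩ := (hcov p hdX).2
      cases x with
      | pt _ => exact hadj.elim
      | seg _ => exact Or.inr ⟨_, hL, elemAdj_seg_of_inter_ptShadow_nonempty hmeet hadj⟩
    · exact Or.inr ⟨d, hDX ⟨hdD, hdX⟩, hadj⟩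

section

variable {α : Type*} {D X Y S : Set α}

lemma ncard_sdiff_union_le (hD : D.Finite) (hXD : X ⊆ D) (hYX : Y.ncard ≤ X.ncard) :
    (D \ X ∪ Y).ncard ≤ D.ncard := by
  have hsdiff := ncard_sdiff_add_ncard_of_subset hXD hD
  have hunion := ncard_union_le (D \ X) Y
  omega

lemma ncard_sdiff_union_inter_lt (hD : D.Finite) (hXD : X ⊆ D ∩ S) (hX : X.Nonempty)
    (hYS : Disjoint Y S) : ((D \ X ∪ Y) ∩ S).ncard < (D ∩ S).ncard := by
  refine (ncard_le_ncard ?_ (hD.inter_of_left S).sdiff).trans_lt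
    (ncard_lt_ncard (hXD.sdiff_ssubset_of_nonempty hX) (hD.inter_of_left S))
  rintro x ⟨hxD | hxY, hxS⟩
  · exact ⟨⟨hxD.1, hxS⟩, hxD.2⟩
  · exact (hYS.ne_of_mem hxY hxS rfl).elim

end

noncomputable def domCost (D : Set Elem) : ℕ ×ₗ ℕ := toLex (D.ncard, (D ∩ range Elem.pt).ncard)

def IsLexMinDom (R : HSR) (D : Set Elem) : Prop :=
  D ⊆ R.elems ∧ Dominates D R.elems ∧
    ∀ D' ⊆ R.elems, Dominates D' R.elems → domCost D ≤ domCost D'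

lemma exists_isLexMinDom (R : HSR) : ∃ D, IsLexMinDom R D := by
  obtain ⟨D, ⟨hD, hdom⟩, hmin⟩ := exists_min_image {D | D ⊆ R.elems ∧ Dominates D R.elems}
    domCost (R.elems_finite.finite_subsets.subset fun _ h => h.1)
    ⟨R.elems, subset_rfl, fun _ hx => Or.inl hx⟩
  exact ⟨D, hD, hdom, fun D' hD' hdom' => hmin D' ⟨hD', hdom'⟩⟩

namespace IsLexMinDom

variable {R : HSR} {D : Set Elem}

lemma ncard_le (hD : IsLexMinDom R D) {D' : Set Elem} (hD' : D' ⊆ R.elems)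
    (hdom : Dominates D' R.elems) : D.ncard ≤ D'.ncard := by
  rcases Prod.Lex.toLex_le_toLex.1 (hD.2.2 D' hD' hdom) with h | ⟨h, -⟩ <;> exact h.le

lemma false_of_exchange (hD : IsLexMinDom R D) {X Y : Set Elem}
    (hXD : X ⊆ D ∩ range Elem.pt) (hX : X.Nonempty) (hY : Y ⊆ Elem.seg '' R.Ls)
    (hYX : Y.ncard ≤ X.ncard)
    (hcov : ∀ p, Elem.pt p ∈ X → (∃ d ∈ D \ X ∪ Y, ElemAdj (.pt p) d) ∧
      ∃ L, Elem.seg L ∈ D \ X ∪ Y ∧ (L.carrier ∩ ptShadow p).Nonempty) : False := by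
  have hDfin := R.elems_finite.subset hD.1
  have hsub : D \ X ∪ Y ⊆ R.elems :=
    union_subset (sdiff_subset.trans hD.1) (hY.trans subset_union_right)
  have hdom := hD.2.1.of_sdiff_subset (hXD.trans inter_subset_right) subset_union_left hcov
  have hYpt : Disjoint Y (range Elem.pt) := by
    refine disjoint_left.2 fun x hxY ⟨p, hp⟩ => ?_
    obtain ⟨L, -, rfl⟩ := hY hxY
    cases hp
  rcases Prod.Lex.toLex_le_toLex.1 (hD.2.2 _ hsub hdom) with h | ⟨-, h⟩
  · exact (ncard_sdiff_union_le hDfin (hXD.trans inter_subset_left) hYX).not_gt h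
  · exact (ncard_sdiff_union_inter_lt hDfin hXD hX hYpt).not_ge h

lemma inter_ptShadow_eq_empty (hD : IsLexMinDom R D)
    (hnbr : ∀ p ∈ R.P, ∃ L ∈ R.Ls, p ∈ setShadow L.carrier) {p : Pt} {L : HSeg}
    (hp : Elem.pt p ∈ D) (hL : Elem.seg L ∈ D) : L.carrier ∩ ptShadow p = ∅ := by
  refine not_nonempty_iff_eq_empty.1 fun hmeet => ?_
  obtain ⟨L₀, hL₀, hpL₀⟩ := hnbr p (HSR.pt_mem_elems.1 (hD.1 hp))
  refine hD.false_of_exchange (X := {.pt p}) (Y := {.seg L₀}) (by simpa using hp)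
    (singleton_nonempty _) (by simpa using hL₀) (by simp) fun q hq => ?_
  obtain rfl : q = p := by simpa using hq
  exact ⟨⟨_, Or.inr rfl, hpL₀⟩, L, Or.inl ⟨hL, by simp⟩, hmeet⟩

lemma notMem_setShadow (hD : IsLexMinDom R D)
    (hhov : ∀ p ∈ R.P, ∃ L ∈ R.Ls, (L.carrier ∩ ptShadow p).Nonempty) {p : Pt} {L : HSeg}
    (hp : Elem.pt p ∈ D) (hL : Elem.seg L ∈ D) : p ∉ setShadow L.carrier := by
  intro hpL
  obtain ⟨Lₕ, hLₕ, hmeet⟩ := hhov p (HSR.pt_mem_elems.1 (hD.1 hp))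
  refine hD.false_of_exchange (X := {.pt p}) (Y := {.seg Lₕ}) (by simpa using hp)
    (singleton_nonempty _) (by simpa using hLₕ) (by simp) fun q hq => ?_
  obtain rfl : q = p := by simpa using hq
  exact ⟨⟨_, Or.inl ⟨hL, by simp⟩, hpL⟩, Lₕ, Or.inr rfl, hmeet⟩

lemma notMem_ptShadow (hD : IsLexMinDom R D)
    (hnbr : ∀ p ∈ R.P, ∃ L ∈ R.Ls, p ∈ setShadow L.carrier)
    (hhov : ∀ p ∈ R.P, ∃ L ∈ R.Ls, (L.carrier ∩ ptShadow p).Nonempty) {a b : Pt}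
    (ha : Elem.pt a ∈ D) (hb : Elem.pt b ∈ D) (hab : a ≠ b) : a ∉ ptShadow b := by
  intro hle
  obtain ⟨L₀, hL₀, hbL₀⟩ := hnbr b (HSR.pt_mem_elems.1 (hD.1 hb))
  obtain ⟨Lₕ, hLₕ, hmeet⟩ := hhov a (HSR.pt_mem_elems.1 (hD.1 ha))
  have hL₀D : Elem.seg L₀ ∈ D \ {.pt a, .pt b} ∪ {.seg L₀, .seg Lₕ} := by simp
  have hLₕD : Elem.seg Lₕ ∈ D \ {.pt a, .pt b} ∪ {.seg L₀, .seg Lₕ} := by simp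
  refine hD.false_of_exchange (X := {.pt a, .pt b}) (Y := {.seg L₀, .seg Lₕ})
    (by simp [insert_subset_iff, ha, hb]) (insert_nonempty _ _)
    (by simp [insert_subset_iff, hL₀, hLₕ]) ((ncard_insert_le _ _).trans ?_) fun q hq => ?_
  · rw [ncard_singleton, ncard_pair (by simpa using hab)]
  · rcases (by simpa using hq : q = a ∨ q = b) with rfl | rfl
    · exact ⟨⟨_, hL₀D, mem_setShadow_of_mem_ptShadow hle hbL₀⟩, Lₕ, hLₕD, hmeet⟩
    · exact ⟨⟨_, hL₀D, hbL₀⟩, Lₕ, hLₕD,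
        hmeet.mono (inter_subset_inter_right _ fun _ hz => mem_ptShadow_trans hz hle)⟩

lemma normalized (hD : IsLexMinDom R D)
    (hnbr : ∀ p ∈ R.P, ∃ L ∈ R.Ls, p ∈ setShadow L.carrier)
    (hhov : ∀ p ∈ R.P, ∃ L ∈ R.Ls, (L.carrier ∩ ptShadow p).Nonempty) {p : Pt}
    (hp : Elem.pt p ∈ D) : (NElemSet R p ∪ HoverSet R p) ∩ D = ∅ := by
  refine eq_empty_of_forall_notMem ?_
  rintro _ ⟨⟨L, -, hpL, rfl⟩ | ⟨p', -, hne, hp', rfl⟩ | ⟨L, -, hmeet, -, rfl⟩, hxD⟩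
  · exact hD.notMem_setShadow hhov hp hxD hpL
  · exact hD.notMem_ptShadow hnbr hhov hxD hp hne hp'
  · exact hmeet.ne_empty (hD.inter_ptShadow_eq_empty hnbr hp hxD)

lemma mem_Pstar (hD : IsLexMinDom R D)
    (hnbr : ∀ p ∈ R.P, ∃ L ∈ R.Ls, p ∈ setShadow L.carrier)
    (hhov : ∀ p ∈ R.P, ∃ L ∈ R.Ls, (L.carrier ∩ ptShadow p).Nonempty) {p : Pt}
    (hp : Elem.pt p ∈ D) : p ∈ Pstar R := by
  refine ⟨HSR.pt_mem_elems.1 (hD.1 hp), fun p' hp' hne hpp' => ?_⟩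
  rcases hD.2.1 (.pt p') (HSR.pt_mem_elems.2 hp') with hp'D | ⟨d, hdD, hadj⟩
  · exact hD.notMem_ptShadow hnbr hhov hp hp'D hne.symm hpp'
  · cases d with
    | pt _ => exact hadj.elim
    | seg L => exact hD.notMem_setShadow hhov hp hdD (mem_setShadow_of_mem_ptShadow hpp' hadj)

end IsLexMinDom

theorem stmt19_general (R : HSR) (hcan : Canonical R)
    (hconn : (graphOf R).Connected) :
    ∃ D : Set Elem, D ⊆ R.elems ∧ Dominates D R.elems ∧
      (∀ D' : Set Elem, D' ⊆ R.elems → Dominates D' R.elems → D.ncard ≤ D'.ncard) ∧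
      (∀ p : Pt, Elem.pt p ∈ D → (NElemSet R p ∪ HoverSet R p) ∩ D = ∅) ∧
      (∀ p : Pt, Elem.pt p ∈ D → p ∈ Pstar R) := by
  have hhov : ∀ p ∈ R.P, ∃ L ∈ R.Ls, (L.carrier ∩ ptShadow p).Nonempty :=
    fun p hp => hcan.exists_inter_ptShadow_nonempty hp
  have hnbr : ∀ p ∈ R.P, ∃ L ∈ R.Ls, p ∈ setShadow L.carrier := fun p hp =>
    have ⟨_, hL, _⟩ := hhov p hp
    exists_mem_setShadow_of_connected hconn hp hL
  obtain ⟨D, hD⟩ := exists_isLexMinDom R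
  exact ⟨D, hD.1, hD.2.1, fun _ => hD.ncard_le, fun _ => hD.normalized hnbr hhov,
    fun _ => hD.mem_Pstar hnbr hhov⟩

/-- Every connected canonical horizontal shadow representation in
general position admits a normalized minimum dominating set. -/
theorem stmt19 (R : HSR) (hgp : GenPos R) (hcan : Canonical R)
    (hconn : (graphOf R).Connected) :
    ∃ D : Set Elem, D ⊆ R.elems ∧ Dominates D R.elems ∧
      (∀ D' : Set Elem, D' ⊆ R.elems → Dominates D' R.elems → D.ncard ≤ D'.ncard) ∧
      (∀ p : Pt, Elem.pt p ∈ D → (NElemSet R p ∪ HoverSet R p) ∩ D = ∅) ∧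
      (∀ p : Pt, Elem.pt p ∈ D → p ∈ Pstar R) :=
  stmt19_general R hcan hconn
end
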